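/- arXiv:2102.08599 — 2 statements merged into one kernel-verified Lean document; each statement's English description precedes it below -/
import Mathlib

section
/- Let λ be a nonzero normalized complex number, m a positive integer, H = N_{λ,m} and A = M_{λ,m}, and let 𝒜 and 𝒜° be the associated subspaces. Then dim 𝒜 − dim 𝒜° = 1; equivalently, there is no complex matrix X (of the size of A) satisfying X·A·H⁻¹ + A·H⁻¹·Xᵀ = 2·A·H⁻¹ and Xᵀ·H·conj(A) + H·conj(A)·X = 0. -/
open Matrix

noncomputable section

open scoped Classical

/-- The `m × m` upper-triangular Jordan block `J_{λ,m}` with eigenvalue `λ`. -/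
def Jb (l : ℂ) (m : ℕ) : Matrix (Fin m) (Fin m) ℂ :=
  Matrix.of fun i j =>
    if (j : ℕ) = (i : ℕ) then l else if (j : ℕ) = (i : ℕ) + 1 then 1 else 0

/-- The `m × m` anti-diagonal matrix `S_m` ( `(i,j)` entry is `1` iff `i + j = m + 1`,
1-based). -/
def Sb (m : ℕ) : Matrix (Fin m) (Fin m) ℂ :=
  Matrix.of fun i j => if (i : ℕ) + (j : ℕ) + 1 = m then 1 else 0

/-- The size `s(λ,m)` of the matrix `M_{λ,m}`: `m` if `λ ∈ ℝ`, and `2m` otherwise. -/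
def sz (l : ℂ) (m : ℕ) : ℕ := if l.im = 0 then m else 2 * m

/-- The matrix `M_{λ,m}`: the Jordan block `J_{λ,m}` if `λ ∈ ℝ`, and the block matrix
`[[0, J_{λ²,m}], [I, 0]]` otherwise. -/
def Mb (l : ℂ) (m : ℕ) : Matrix (Fin (sz l m)) (Fin (sz l m)) ℂ :=
  Matrix.of fun i j =>
    if l.im = 0 then
      (if (j : ℕ) = (i : ℕ) then l else if (j : ℕ) = (i : ℕ) + 1 then 1 else 0)
    else if (i : ℕ) < m ∧ m ≤ (j : ℕ) then
      (if (j : ℕ) - m = (i : ℕ) then l ^ 2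
       else if (j : ℕ) - m = (i : ℕ) + 1 then 1 else 0)
    else if m ≤ (i : ℕ) ∧ (i : ℕ) - m = (j : ℕ) then 1 else 0

/-- The matrix `N_{λ,m}`: `S_m` if `λ ∈ ℝ` and `S_{2m}` otherwise. -/
def Nb (l : ℂ) (m : ℕ) : Matrix (Fin (sz l m)) (Fin (sz l m)) ℂ := Sb (sz l m)

/-- A complex number is normalized if `Re λ ≥ 0` and, when `Re λ = 0`, also `Im λ ≥ 0`. -/
def Normalized (l : ℂ) : Prop := 0 ≤ l.re ∧ (l.re = 0 → 0 ≤ l.im)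

/-- The linear map `B ↦ B * X + X * Bᵀ`. -/
def rmap {n : Type*} [Fintype n] (X : Matrix n n ℂ) :
    Matrix n n ℂ →ₗ[ℂ] Matrix n n ℂ where
  toFun B := B * X + X * Bᵀ
  map_add' B C := by
    simp only [Matrix.add_mul, Matrix.mul_add, Matrix.transpose_add]
    abel
  map_smul' c B := by
    simp only [Matrix.smul_mul, Matrix.mul_smul, Matrix.transpose_smul, smul_add,
      RingHom.id_apply]

/-- The linear map `B ↦ Bᵀ * Y + Y * B`. -/
def lmap {n : Type*} [Fintype n] (Y : Matrix n n ℂ) :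
    Matrix n n ℂ →ₗ[ℂ] Matrix n n ℂ where
  toFun B := Bᵀ * Y + Y * B
  map_add' B C := by
    simp only [Matrix.add_mul, Matrix.mul_add, Matrix.transpose_add]
    abel
  map_smul' c B := by
    simp only [Matrix.smul_mul, Matrix.mul_smul, Matrix.transpose_smul, smul_add,
      RingHom.id_apply]

/-- The subspace `𝒜°` associated with `(H, A)`:  matrices `B` with
`B·A·H⁻¹ + A·H⁻¹·Bᵀ = 0` and `Bᵀ·H·conj(A) + H·conj(A)·B = 0`. -/
def scriptAo {n : Type*} [Fintype n] [DecidableEq n] (H A : Matrix n n ℂ) :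
    Submodule ℂ (Matrix n n ℂ) :=
  LinearMap.ker (rmap (A * H⁻¹)) ⊓ LinearMap.ker (lmap (H * A.map (starRingEnd ℂ)))

/-- The subspace `𝒜` associated with `(H, A)`:  matrices `B` with
`B·A·H⁻¹ + A·H⁻¹·Bᵀ ∈ ℂ·(A·H⁻¹)` and `Bᵀ·H·conj(A) + H·conj(A)·B ∈ ℂ·(H·conj(A))`. -/
def scriptA {n : Type*} [Fintype n] [DecidableEq n] (H A : Matrix n n ℂ) :
    Submodule ℂ (Matrix n n ℂ) :=
  Submodule.comap (rmap (A * H⁻¹)) (Submodule.span ℂ {A * H⁻¹}) ⊓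
    Submodule.comap (lmap (H * A.map (starRingEnd ℂ)))
      (Submodule.span ℂ {H * A.map (starRingEnd ℂ)})


set_option maxHeartbeats 1000000
set_option synthInstance.maxHeartbeats 400000

lemma Sb_mul_Sb (N : ℕ) : Sb N * Sb N = 1 := by
  ext i j
  have hi := i.isLt
  have hj := j.isLt
  rw [Matrix.mul_apply]
  rw [Finset.sum_eq_single (⟨N - 1 - (i:ℕ), by omega⟩ : Fin N)]
  · simp only [Sb, Matrix.of_apply, Matrix.one_apply, Fin.ext_iff]
    split_ifs <;> first | rfl | omega | (exfalso; omega) | ring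
  · intro k _ hk
    have hkne : (k:ℕ) ≠ N - 1 - (i:ℕ) := fun h => hk (Fin.ext h)
    simp only [Sb, Matrix.of_apply]
    rw [if_neg (by omega)]
    exact zero_mul _
  · intro h; exact absurd (Finset.mem_univ _) h

lemma Sb_det_ne (N : ℕ) : (Sb N).det ≠ 0 := by
  intro h
  have h1 : (Sb N * Sb N).det = 1 := by rw [Sb_mul_Sb]; simp
  rw [Matrix.det_mul, h, mul_zero] at h1
  exact zero_ne_one h1

lemma Mb_det_real (l : ℂ) (him : l.im = 0) (m : ℕ) :
    (Mb l m).det = l ^ (sz l m) := by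
  rw [Matrix.det_of_upperTriangular (M := Mb l m) ?_]
  · rw [Finset.prod_congr rfl (fun i _ => show Mb l m i i = l by
      simp [Mb, him])]
    simp
  · intro i j hji
    have : (j:ℕ) < (i:ℕ) := hji
    simp only [Mb, Matrix.of_apply, if_pos him]
    rw [if_neg (by omega), if_neg (by omega)]

lemma Mb_sq_lower (l : ℂ) (him : ¬ l.im = 0) (m : ℕ) {i j : Fin (sz l m)}
    (hji : (j:ℕ) < (i:ℕ)) : (Mb l m * Mb l m) i j = 0 := by
  have hsz : sz l m = 2 * m := by simp [sz, him]
  have hi := i.isLt; have hj := j.isLt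
  rw [Matrix.mul_apply]
  apply Finset.sum_eq_zero
  intro k _
  have hk := k.isLt
  simp only [Mb, Matrix.of_apply, Fin.val_mk, if_neg him]
  split_ifs <;> (try simp only [and_true, true_and] at *) <;> first | ring1 | omega | (exfalso; omega)

lemma Mb_sq_diag (l : ℂ) (him : ¬ l.im = 0) (m : ℕ) (i : Fin (sz l m)) :
    (Mb l m * Mb l m) i i = l ^ 2 := by
  have hsz : sz l m = 2 * m := by simp [sz, him]
  have hi := i.isLt
  rw [Matrix.mul_apply]
  by_cases hlt : (i:ℕ) < m
  · rw [Finset.sum_eq_single (⟨m + (i:ℕ), by omega⟩ : Fin (sz l m))]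
    · simp only [Mb, Matrix.of_apply, Fin.val_mk, if_neg him]
      split_ifs <;> (try simp only [and_true, true_and] at *) <;> first | ring1 | omega | (exfalso; omega)
    · intro k _ hkne
      have hk := k.isLt
      have : (k:ℕ) ≠ m + (i:ℕ) := fun h => hkne (Fin.ext h)
      simp only [Mb, Matrix.of_apply, Fin.val_mk, if_neg him]
      split_ifs <;> (try simp only [and_true, true_and] at *) <;> first | ring1 | omega | (exfalso; omega)
    · intro h; exact absurd (Finset.mem_univ _) h
  · rw [Finset.sum_eq_single (⟨(i:ℕ) - m, by omega⟩ : Fin (sz l m))]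
    · simp only [Mb, Matrix.of_apply, Fin.val_mk, if_neg him]
      split_ifs <;> (try simp only [and_true, true_and] at *) <;> first | ring1 | omega | (exfalso; omega)
    · intro k _ hkne
      have hk := k.isLt
      have : (k:ℕ) ≠ (i:ℕ) - m := fun h => hkne (Fin.ext h)
      simp only [Mb, Matrix.of_apply, Fin.val_mk, if_neg him]
      split_ifs <;> (try simp only [and_true, true_and] at *) <;> first | ring1 | omega | (exfalso; omega)
    · intro h; exact absurd (Finset.mem_univ _) h

lemma Mb_det_ne (l : ℂ) (hl0 : l ≠ 0) (m : ℕ) : (Mb l m).det ≠ 0 := by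
  by_cases him : l.im = 0
  · rw [Mb_det_real l him m]
    exact pow_ne_zero _ hl0
  · intro h
    have h1 : (Mb l m * Mb l m).det = (l ^ 2) ^ (sz l m) := by
      rw [Matrix.det_of_upperTriangular (M := Mb l m * Mb l m)
        (fun i j hji => Mb_sq_lower l him m hji)]
      rw [Finset.prod_congr rfl (fun i _ => Mb_sq_diag l him m i)]
      simp
    rw [Matrix.det_mul, h, mul_zero] at h1
    exact pow_ne_zero _ (pow_ne_zero 2 hl0) h1.symm

lemma rmap_apply {n : Type*} [Fintype n] (X B : Matrix n n ℂ) :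
    rmap X B = B * X + X * Bᵀ := rfl

lemma lmap_apply {n : Type*} [Fintype n] (Y B : Matrix n n ℂ) :
    lmap Y B = Bᵀ * Y + Y * B := rfl

lemma trace_scale_right {n : Type*} [Fintype n] [DecidableEq n]
    (X B : Matrix n n ℂ) (a : ℂ) (hX : IsUnit X.det)
    (h : B * X + X * Bᵀ = a • X) :
    a * (Fintype.card n : ℂ) = 2 * B.trace := by
  have h2 := congrArg (fun M => (M * X⁻¹).trace) h
  simp only [Matrix.add_mul, Matrix.trace_add, Matrix.smul_mul, Matrix.trace_smul] at h2
  rw [Matrix.mul_assoc B X X⁻¹, Matrix.mul_nonsing_inv _ hX, Matrix.mul_one,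
    Matrix.trace_mul_comm (X * Bᵀ) X⁻¹, ← Matrix.mul_assoc, Matrix.nonsing_inv_mul _ hX,
    Matrix.one_mul, Matrix.trace_transpose, Matrix.trace_one, smul_eq_mul] at h2
  linear_combination -h2

lemma trace_scale_left {n : Type*} [Fintype n] [DecidableEq n]
    (Y B : Matrix n n ℂ) (a : ℂ) (hY : IsUnit Y.det)
    (h : Bᵀ * Y + Y * B = a • Y) :
    a * (Fintype.card n : ℂ) = 2 * B.trace := by
  have h2 := congrArg (fun M => (Y⁻¹ * M).trace) h
  simp only [Matrix.mul_add, Matrix.trace_add, Matrix.mul_smul, Matrix.trace_smul] at h2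
  rw [Matrix.trace_mul_comm Y⁻¹ (Bᵀ * Y), Matrix.mul_assoc Bᵀ Y Y⁻¹,
    Matrix.mul_nonsing_inv _ hY, Matrix.mul_one, Matrix.trace_transpose,
    ← Matrix.mul_assoc Y⁻¹ Y B, Matrix.nonsing_inv_mul _ hY, Matrix.one_mul,
    Matrix.trace_one, smul_eq_mul] at h2
  linear_combination -h2

lemma noconf {n : Type*} [Fintype n] [DecidableEq n] [Nonempty n]
    (X Y : Matrix n n ℂ) (hX : IsUnit X.det) (hY : IsUnit Y.det) :
    ¬ ∃ B : Matrix n n ℂ, B * X + X * Bᵀ = (2:ℂ) • X ∧ Bᵀ * Y + Y * B = 0 := by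
  rintro ⟨B, h1, h2⟩
  have hcard : ((Fintype.card n : ℂ)) ≠ 0 :=
    Nat.cast_ne_zero.mpr Fintype.card_ne_zero
  have e1 := trace_scale_right X B 2 hX h1
  have e2 := trace_scale_left Y B 0 hY (by rw [h2, zero_smul])
  rw [zero_mul] at e2
  rw [← e2] at e1
  exact hcard (by linear_combination e1 / 2)

lemma dim_lemma {n : Type*} [Fintype n] [DecidableEq n] [Nonempty n]
    (X Y : Matrix n n ℂ) (hX : IsUnit X.det) (hY : IsUnit Y.det) :
    Module.finrank ℂ ↥(Submodule.comap (rmap X) (Submodule.span ℂ {X}) ⊓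
        Submodule.comap (lmap Y) (Submodule.span ℂ {Y})) =
      Module.finrank ℂ ↥(LinearMap.ker (rmap X) ⊓ LinearMap.ker (lmap Y)) + 1 := by
  set p : Submodule ℂ (Matrix n n ℂ) :=
    Submodule.comap (rmap X) (Submodule.span ℂ {X}) ⊓
      Submodule.comap (lmap Y) (Submodule.span ℂ {Y}) with hp
  set q : Submodule ℂ (Matrix n n ℂ) :=
    LinearMap.ker (rmap X) ⊓ LinearMap.ker (lmap Y) with hq
  have hcard : ((Fintype.card n : ℂ)) ≠ 0 :=
    Nat.cast_ne_zero.mpr Fintype.card_ne_zero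
  have hqp : q ≤ p := by
    intro B hB
    obtain ⟨hB1, hB2⟩ := Submodule.mem_inf.mp hB
    refine Submodule.mem_inf.mpr ⟨Submodule.mem_comap.mpr ?_, Submodule.mem_comap.mpr ?_⟩
    · rw [LinearMap.mem_ker.mp hB1]; exact Submodule.zero_mem _
    · rw [LinearMap.mem_ker.mp hB2]; exact Submodule.zero_mem _
  have h1p : (1 : Matrix n n ℂ) ∈ p := by
    refine Submodule.mem_inf.mpr ⟨Submodule.mem_comap.mpr ?_, Submodule.mem_comap.mpr ?_⟩
    · refine Submodule.mem_span_singleton.mpr ⟨2, ?_⟩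
      rw [rmap_apply, Matrix.transpose_one, Matrix.one_mul, Matrix.mul_one, two_smul]
    · refine Submodule.mem_span_singleton.mpr ⟨2, ?_⟩
      rw [lmap_apply, Matrix.transpose_one, Matrix.one_mul, Matrix.mul_one, two_smul]
  -- the trace functional on p
  set f : ↥p →ₗ[ℂ] ℂ := (Matrix.traceLinearMap n ℂ ℂ).comp p.subtype with hf
  have hfval : ∀ B : ↥p, f B = (B : Matrix n n ℂ).trace := fun B => rfl
  have hker : LinearMap.ker f = Submodule.comap p.subtype q := by
    ext B
    obtain ⟨a, ha⟩ := Submodule.mem_span_singleton.mp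
      (Submodule.mem_comap.mp (Submodule.mem_inf.mp B.2).1)
    obtain ⟨b, hb⟩ := Submodule.mem_span_singleton.mp
      (Submodule.mem_comap.mp (Submodule.mem_inf.mp B.2).2)
    rw [rmap_apply] at ha
    rw [lmap_apply] at hb
    have ea := trace_scale_right X (B : Matrix n n ℂ) a hX ha.symm
    have eb := trace_scale_left Y (B : Matrix n n ℂ) b hY hb.symm
    simp only [LinearMap.mem_ker, Submodule.mem_comap, hfval, hq, Submodule.mem_inf]
    constructor
    · intro htr
      rw [htr, mul_zero] at ea eb
      have ha0 : a = 0 := by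
        rcases mul_eq_zero.mp ea with h | h
        · exact h
        · exact absurd h hcard
      have hb0 : b = 0 := by
        rcases mul_eq_zero.mp eb with h | h
        · exact h
        · exact absurd h hcard
      constructor
      · show (B : Matrix n n ℂ) * X + X * (B : Matrix n n ℂ)ᵀ = 0
        rw [← ha, ha0, zero_smul]
      · show (B : Matrix n n ℂ)ᵀ * Y + Y * (B : Matrix n n ℂ) = 0
        rw [← hb, hb0, zero_smul]
    · rintro ⟨hk1, hk2⟩
      have h0 : (B : Matrix n n ℂ) * X + X * (B : Matrix n n ℂ)ᵀ = (0:ℂ) • X := by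
        rw [zero_smul]; exact hk1
      have h00 := trace_scale_right X (B : Matrix n n ℂ) 0 hX h0
      rw [zero_mul] at h00
      linear_combination -h00 / 2
  have hrange : LinearMap.range f = ⊤ := by
    rw [eq_top_iff]
    intro x _
    refine ⟨(x / (Fintype.card n : ℂ)) • ⟨1, h1p⟩, ?_⟩
    have h1tr : f ⟨1, h1p⟩ = (Fintype.card n : ℂ) := by
      rw [hfval]; exact Matrix.trace_one
    rw [LinearMap.map_smul, h1tr, smul_eq_mul, div_mul_cancel₀ x hcard]
  have hrank := LinearMap.finrank_range_add_finrank_ker f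
  rw [hker, hrange, finrank_top, Module.finrank_self] at hrank
  have hcomap : Module.finrank ℂ ↥(Submodule.comap p.subtype q) = Module.finrank ℂ ↥q :=
    LinearEquiv.finrank_eq (Submodule.comapSubtypeEquivOfLe hqp)
  rw [hcomap] at hrank
  omega


/-- For a nonzero normalized `λ`, with `H = N_{λ,m}` and `A = M_{λ,m}`,
one has `dim 𝒜 − dim 𝒜° = 1`; equivalently there is no conformal scaling element `X`. -/
theorem stmt9 (l : ℂ) (hl0 : l ≠ 0) (hl : Normalized l) (m : ℕ) (hm : 0 < m) :
    Module.finrank ℂ ↥(scriptA (Nb l m) (Mb l m)) =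
      Module.finrank ℂ ↥(scriptAo (Nb l m) (Mb l m)) + 1 ∧
    ¬∃ X : Matrix (Fin (sz l m)) (Fin (sz l m)) ℂ,
      X * (Mb l m * (Nb l m)⁻¹) + Mb l m * (Nb l m)⁻¹ * Xᵀ =
        (2 : ℂ) • (Mb l m * (Nb l m)⁻¹) ∧
      Xᵀ * (Nb l m * (Mb l m).map (starRingEnd ℂ)) +
        Nb l m * (Mb l m).map (starRingEnd ℂ) * X = 0 := by
  have hsz : 0 < sz l m := by unfold sz; split <;> omega
  have hne : Nonempty (Fin (sz l m)) := ⟨⟨0, hsz⟩⟩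
  have hSdet : (Nb l m).det ≠ 0 := Sb_det_ne (sz l m)
  have hAdet : (Mb l m).det ≠ 0 := Mb_det_ne l hl0 m
  have hXdet : IsUnit (Mb l m * (Nb l m)⁻¹).det := by
    rw [Matrix.det_mul, Matrix.det_nonsing_inv]
    refine isUnit_iff_ne_zero.mpr (mul_ne_zero hAdet ?_)
    rw [Ring.inverse_eq_inv']
    exact inv_ne_zero hSdet
  have hYdet : IsUnit (Nb l m * (Mb l m).map (starRingEnd ℂ)).det := by
    rw [Matrix.det_mul]
    refine isUnit_iff_ne_zero.mpr (mul_ne_zero hSdet ?_)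
    rw [← RingHom.mapMatrix_apply, ← RingHom.map_det]
    simpa using hAdet
  constructor
  · exact dim_lemma _ _ hXdet hYdet
  · exact noconf _ _ hXdet hYdet
end
end

section
/- Let (H, A) be a canonical pair of size N×N whose data satisfies λ₁ = λ₂ = … = λ_γ = λ for some nonzero λ. Then dim 𝒜 ≤ N(N−1)/2 + 1. -/
open Matrix

noncomputable section

open scoped Classical

/-!
Write `X := A H⁻¹`. Since `S² = 1` and every block `M_{λ,m} S` is symmetric, `H` is an involution
and `X` is symmetric; since `λ ≠ 0`, every `M_{λ,m}` and hence `X` is invertible. The first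
condition defining `𝒜` says `B X + (B X)ᵀ ∈ ℂ X`, so its solutions form a space at most one
dimension larger than the kernel of `B ↦ B X + (B X)ᵀ`. On that kernel `B ↦ B X` is injective
with skew-symmetric values, and a skew-symmetric matrix is determined by its `N(N-1)/2` entries
above the diagonal.
-/

theorem Fintype.card_subtype_fst_lt_snd {n : Type*} [Fintype n] [LinearOrder n] :
    Fintype.card {p : n × n // p.1 < p.2} = (Fintype.card n).choose 2 := by
  rw [← Sym2.card_subtype_not_diag]
  refine Fintype.card_congr ((Sym2.sortEquiv.subtypeEquiv (p := fun z => ¬z.IsDiag)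
    (q := fun p => p.1.1 < p.1.2) fun z => ?_).trans
    (Equiv.subtypeSubtypeEquivSubtype (p := fun p : n × n => p.1 ≤ p.2)
      (q := fun p => p.1 < p.2) fun h => h.le)).symm
  induction z with | _ a b
  rcases le_total a b with h | h <;> simp [h, lt_iff_le_and_ne, eq_comm]

theorem LinearMap.finrank_comap_le_finrank_ker_add {K V W : Type*} [DivisionRing K]
    [AddCommGroup V] [Module K V] [AddCommGroup W] [Module K W] [FiniteDimensional K V]
    [FiniteDimensional K W] (f : V →ₗ[K] W) (p : Submodule K W) :
    Module.finrank K (p.comap f) ≤ Module.finrank K (LinearMap.ker f) + Module.finrank K p := by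
  have hrn := (f.domRestrict (p.comap f)).finrank_range_add_finrank_ker
  rw [LinearMap.range_domRestrict, LinearMap.ker_domRestrict,
    (Submodule.comapSubtypeEquivOfLe (LinearMap.ker_le_comap f)).finrank_eq] at hrn
  have := Submodule.finrank_mono (Submodule.map_comap_le f p)
  omega

theorem Matrix.eq_zero_of_transpose_eq_neg {n R : Type*} [LinearOrder n] [Ring R]
    [NoZeroDivisors R] [CharZero R] {M : Matrix n n R} (hM : Mᵀ = -M)
    (hM' : ∀ i j, i < j → M i j = 0) : M = 0 := by
  have hskew : ∀ i j, M j i = -M i j := fun i j => congrFun (congrFun hM i) j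
  ext i j
  rcases lt_trichotomy i j with h | rfl | h
  · exact hM' i j h
  · exact self_eq_neg.mp (hskew i i)
  · rw [hskew, hM' j i h, neg_zero, Matrix.zero_apply]

section rmap

variable {n : Type*} [Fintype n] [DecidableEq n] (X : Matrix n n ℂ)

theorem finrank_ker_rmap_le (hX : Xᵀ = X) (hXu : IsUnit X) :
    Module.finrank ℂ (LinearMap.ker (rmap X)) ≤ (Fintype.card n).choose 2 := by
  have hcancel : ∀ B : Matrix n n ℂ, B * X = 0 → B = 0 := fun B h =>
    hXu.mul_left_injective (h.trans (zero_mul X).symm)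
  -- any linear order will do: it only selects the entries above the diagonal
  let _ : LinearOrder n := LinearOrder.lift' _ (Fintype.equivFin n).injective
  let upper : LinearMap.ker (rmap X) →ₗ[ℂ] ({p : n × n // p.1 < p.2} → ℂ) :=
    { toFun := fun B p => ((B : Matrix n n ℂ) * X) p.1.1 p.1.2
      map_add' := fun B C => by ext; simp [Matrix.add_mul]
      map_smul' := fun c B => by ext; simp }
  have hupper : Function.Injective upper := by
    refine (injective_iff_map_eq_zero upper).mpr fun B hB => Subtype.ext (hcancel B ?_)
    have hskew : ((B : Matrix n n ℂ) * X)ᵀ = -((B : Matrix n n ℂ) * X) := by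
      rw [Matrix.transpose_mul, hX, eq_neg_iff_add_eq_zero, add_comm]
      exact B.2
    exact Matrix.eq_zero_of_transpose_eq_neg hskew fun i j h => congrFun hB ⟨(i, j), h⟩
  calc Module.finrank ℂ (LinearMap.ker (rmap X))
      ≤ Module.finrank ℂ ({p : n × n // p.1 < p.2} → ℂ) :=
        LinearMap.finrank_le_finrank_of_injective hupper
    _ = (Fintype.card n).choose 2 := by
        rw [Module.finrank_fintype_fun_eq_card, Fintype.card_subtype_fst_lt_snd]

theorem finrank_comap_rmap_span_le (hX : Xᵀ = X) (hXu : IsUnit X) :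
    Module.finrank ℂ ((Submodule.span ℂ {X}).comap (rmap X)) ≤
      Fintype.card n * (Fintype.card n - 1) / 2 + 1 := by
  calc _ ≤ Module.finrank ℂ (LinearMap.ker (rmap X)) + Module.finrank ℂ (Submodule.span ℂ {X}) :=
        LinearMap.finrank_comap_le_finrank_ker_add _ _
    _ ≤ _ := by
        rw [← Nat.choose_two_right]
        exact add_le_add (finrank_ker_rmap_le X hX hXu)
          ((finrank_span_le_card {X}).trans (by simp))

end rmap

theorem Sb_eq_permMatrix (k : ℕ) : Sb k = (Fin.revPerm : Equiv.Perm (Fin k)).permMatrix ℂ := by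
  ext i j
  simp only [Sb, Matrix.of_apply, PEquiv.toMatrix_apply, Equiv.toPEquiv_apply, Option.mem_def,
    Option.some.injEq, Fin.revPerm_apply, Fin.ext_iff, Fin.val_rev]
  congr 1
  apply propext
  omega

theorem Sb_mul_self (k : ℕ) : Sb k * Sb k = 1 := by
  rw [Sb_eq_permMatrix, ← Matrix.permMatrix_mul,
    show Fin.revPerm * Fin.revPerm = 1 from Equiv.ext Fin.rev_rev, Matrix.permMatrix_one]

theorem mul_Sb {m : Type*} {k : ℕ} (M : Matrix m (Fin k) ℂ) :
    M * Sb k = M.submatrix id Fin.rev := by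
  rw [Sb_eq_permMatrix, PEquiv.mul_toMatrix_toPEquiv, Fin.revPerm_symm]
  rfl

theorem Nb_mul_self (μ : ℂ) (m : ℕ) : Nb μ m * Nb μ m = 1 := Sb_mul_self _

theorem sz_of_im_ne_zero {μ : ℂ} (h : μ.im ≠ 0) (m : ℕ) : sz μ m = 2 * m := if_neg h

section Mb

variable (μ : ℂ) (m : ℕ)

theorem Mb_apply_rev_comm (i j : Fin (sz μ m)) : Mb μ m j i.rev = Mb μ m i j.rev := by
  have hi := i.isLt
  have hj := j.isLt
  by_cases him : μ.im = 0
  · simp only [Mb, Matrix.of_apply, if_pos him, Fin.val_rev]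
    split_ifs <;> first | rfl | omega
  · have hsz := sz_of_im_ne_zero him m
    simp only [Mb, Matrix.of_apply, if_neg him, Fin.val_rev]
    split_ifs <;> first | rfl | omega

theorem transpose_Mb_mul_Nb : (Mb μ m * Nb μ m)ᵀ = Mb μ m * Nb μ m := by
  ext i j
  simp only [Nb, mul_Sb, Matrix.transpose_apply, Matrix.submatrix_apply, id, Mb_apply_rev_comm]

/- For non-real `μ`, `M_{μ,m}` is not triangular, but its square is `J_{μ²,m} ⊕ J_{μ²,m}`. -/
theorem Mb_mul_self_isUpperTriangular : (Mb μ m * Mb μ m).IsUpperTriangular := by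
  intro i j hji
  change (j : ℕ) < i at hji
  rw [Matrix.mul_apply]
  refine Finset.sum_eq_zero fun k _ => ?_
  by_cases him : μ.im = 0
  · simp only [Mb, Matrix.of_apply, if_pos him]
    split_ifs <;> first | omega | simp
  · have hsz := sz_of_im_ne_zero him m
    simp only [Mb, Matrix.of_apply, if_neg him]
    split_ifs <;> first | omega | simp

theorem Mb_mul_self_apply_self (i : Fin (sz μ m)) : (Mb μ m * Mb μ m) i i = μ ^ 2 := by
  have hi := i.isLt
  by_cases him : μ.im = 0
  · rw [Matrix.mul_apply, Finset.sum_eq_single i]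
    · simp [Mb, him, sq]
    · intro k _ hk
      have hk' : (k : ℕ) ≠ i := Fin.val_ne_of_ne hk
      simp only [Mb, Matrix.of_apply, if_pos him]
      split_ifs <;> first | omega | simp
    · simp
  · have hsz := sz_of_im_ne_zero him m
    have hsingle : ∀ k : Fin (sz μ m), ((i : ℕ) < m → (k : ℕ) = i + m) →
        (m ≤ i → (k : ℕ) = i - m) → (Mb μ m * Mb μ m) i i = μ ^ 2 := by
      intro k hk1 hk2
      rw [Matrix.mul_apply, Finset.sum_eq_single k]
      · simp only [Mb, Matrix.of_apply, if_neg him]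
        split_ifs <;> first | omega | simp [mul_comm]
      · intro b _ hb
        have hb' : (b : ℕ) ≠ k := Fin.val_ne_of_ne hb
        simp only [Mb, Matrix.of_apply, if_neg him]
        split_ifs <;> first | omega | simp
      · simp
    by_cases hlt : (i : ℕ) < m
    · exact hsingle ⟨i + m, by omega⟩ (fun _ => rfl) (by omega)
    · exact hsingle ⟨i - m, by omega⟩ (by omega) (fun _ => rfl)

end Mb

theorem isUnit_Mb {μ : ℂ} (hμ : μ ≠ 0) (m : ℕ) : IsUnit (Mb μ m) := by
  have hsq : (Mb μ m).det * (Mb μ m).det = (μ ^ 2) ^ sz μ m := by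
    rw [← Matrix.det_mul, Matrix.det_of_isUpperTriangular (Mb_mul_self_isUpperTriangular μ m)]
    simp [Mb_mul_self_apply_self]
  refine (Matrix.isUnit_iff_isUnit_det _).mpr (isUnit_iff_ne_zero.mpr fun h => ?_)
  rw [h, zero_mul] at hsq
  exact pow_ne_zero _ (pow_ne_zero _ hμ) hsq.symm

theorem stmt15_general (γ : ℕ) (lam : Fin γ → ℂ) (mm : Fin γ → ℕ) (eps : Fin γ → ℂ)
    (heps : ∀ i, eps i = 1 ∨ eps i = -1)
    (l : ℂ) (hl : l ≠ 0) (hlam : ∀ i, lam i = l)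
    (H A : Matrix ((i : Fin γ) × Fin (sz (lam i) (mm i)))
      ((i : Fin γ) × Fin (sz (lam i) (mm i))) ℂ)
    (hH : H = Matrix.blockDiagonal' fun i => eps i • Nb (lam i) (mm i))
    (hA : A = Matrix.blockDiagonal' fun i => Mb (lam i) (mm i)) :
    Module.finrank ℂ ↥(scriptA H A) ≤
      Fintype.card ((i : Fin γ) × Fin (sz (lam i) (mm i))) *
        (Fintype.card ((i : Fin γ) × Fin (sz (lam i) (mm i))) - 1) / 2 + 1 := by
  have hHH : H * H = 1 := by
    rw [hH, ← Matrix.blockDiagonal'_mul, ← Matrix.blockDiagonal'_one]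
    congr 1
    funext i
    rw [smul_mul_smul_comm, Nb_mul_self]
    rcases heps i with h | h <;> simp [h]
  have hunit : IsUnit (A * H⁻¹) := by
    rw [Matrix.inv_eq_left_inv hHH, hA]
    refine .mul ?_ (.of_mul_eq_one H hHH)
    exact (Pi.isUnit_iff.mpr fun i => isUnit_Mb (hlam i ▸ hl) _).map
      (Matrix.blockDiagonal'RingHom _ ℂ)
  have hsymm : (A * H⁻¹)ᵀ = A * H⁻¹ := by
    rw [Matrix.inv_eq_left_inv hHH, hA, hH, ← Matrix.blockDiagonal'_mul,
      Matrix.blockDiagonal'_transpose]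
    congr 1
    funext i
    rw [Matrix.mul_smul, Matrix.transpose_smul, transpose_Mb_mul_Nb]
  exact (Submodule.finrank_mono inf_le_left).trans (finrank_comap_rmap_span_le _ hsymm hunit)

/-- For a canonical pair `(H, A)` of size `N × N` all of whose
parameters `λᵢ` equal a common nonzero `λ`, `dim 𝒜 ≤ N(N−1)/2 + 1`. -/
theorem stmt15 (γ : ℕ) (hγ : 0 < γ) (lam : Fin γ → ℂ) (mm : Fin γ → ℕ) (eps : Fin γ → ℂ)
    (hnorm : ∀ i, Normalized (lam i)) (hm : ∀ i, 0 < mm i)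
    (heps : ∀ i, eps i = 1 ∨ eps i = -1)
    (l : ℂ) (hl : l ≠ 0) (hlam : ∀ i, lam i = l)
    (H A : Matrix ((i : Fin γ) × Fin (sz (lam i) (mm i)))
      ((i : Fin γ) × Fin (sz (lam i) (mm i))) ℂ)
    (hH : H = Matrix.blockDiagonal' fun i => eps i • Nb (lam i) (mm i))
    (hA : A = Matrix.blockDiagonal' fun i => Mb (lam i) (mm i)) :
    Module.finrank ℂ ↥(scriptA H A) ≤
      Fintype.card ((i : Fin γ) × Fin (sz (lam i) (mm i))) *
        (Fintype.card ((i : Fin γ) × Fin (sz (lam i) (mm i))) - 1) / 2 + 1 :=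
  stmt15_general γ lam mm eps heps l hl hlam H A hH hA
end
end
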